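/- The center of S is exactly the set of elements with vanishing first coordinate: Z(S) = {(0, b) : b ∈ F₈}. In particular Z(S) is isomorphic to the additive group of F₈, hence elementary abelian of order 8. -/

import Mathlib

/-- The field with 8 elements. -/
noncomputable abbrev F8 : Type := GaloisField 2 3

/-- A Sylow 2-subgroup of the Suzuki group `Sz(8)`: the underlying set is `F₈ × F₈`
with multiplication `(a, b) * (c, d) = (a + c, b + d + c * a ^ 4)`. -/
structure SylowSz8 where
  a : F8
  b : F8

namespace SylowSz8

noncomputable instance : Mul SylowSz8 :=
  ⟨fun x y => ⟨x.a + y.a, x.b + y.b + y.a * x.a ^ 4⟩⟩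

noncomputable instance : One SylowSz8 := ⟨⟨0, 0⟩⟩

noncomputable instance : Inv SylowSz8 := ⟨fun x => ⟨x.a, x.b + x.a ^ 5⟩⟩

@[simp] theorem mul_a (x y : SylowSz8) : (x * y).a = x.a + y.a := rfl
@[simp] theorem mul_b (x y : SylowSz8) : (x * y).b = x.b + y.b + y.a * x.a ^ 4 := rfl
@[simp] theorem one_a : (1 : SylowSz8).a = 0 := rfl
@[simp] theorem one_b : (1 : SylowSz8).b = 0 := rfl
@[simp] theorem inv_a (x : SylowSz8) : x⁻¹.a = x.a := rfl
@[simp] theorem inv_b (x : SylowSz8) : x⁻¹.b = x.b + x.a ^ 5 := rfl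

theorem ext' : ∀ {x y : SylowSz8}, x.a = y.a → x.b = y.b → x = y
  | ⟨_, _⟩, ⟨_, _⟩, rfl, rfl => rfl

noncomputable instance : Group SylowSz8 where
  mul_assoc x y z := by
    have frob : ∀ u v : F8, (u + v) ^ 4 = u ^ 4 + v ^ 4 := fun u v => by
      have := add_pow_char_pow (R := F8) (p := 2) (n := 2) u v
      simpa using this
    refine ext' ?_ ?_
    · simp [add_assoc]
    · simp only [mul_b, mul_a, frob]
      ring
  one_mul x := by
    refine ext' ?_ ?_ <;> simp
  mul_one x := by
    refine ext' ?_ ?_ <;> simp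
  inv_mul_cancel x := by
    have h2 : ∀ u : F8, u + u = 0 := fun u => CharTwo.add_self_eq_zero u
    refine ext' ?_ ?_
    · simp [h2]
    · simp only [mul_b, inv_a, inv_b, one_b]
      have : x.a * x.a ^ 4 = x.a ^ 5 := by ring
      rw [this]
      calc x.b + x.a ^ 5 + x.b + x.a ^ 5
          = (x.b + x.b) + (x.a ^ 5 + x.a ^ 5) := by ring
        _ = 0 := by rw [h2, h2, add_zero]

end SylowSz8

/-! Two elements `(a, b)` and `(c, d)` commute iff `c * a ^ 4 = a * c ^ 4`. Testing a central
element against `c = 1` gives `a ^ 4 = a`, and then against any `t` with `t ^ 4 ≠ t` (which exists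
because `X ^ 4 - X` has at most four roots in `F₈`) gives `a = 0`. Conversely `b ↦ (0, b)` is an
injective homomorphism from `(F₈, +)` onto the center. -/
open Polynomial in
theorem exists_pow_ne_self {R : Type*} [CommRing R] [IsDomain R] [Finite R] {n : ℕ}
    (hn : 1 < n) (hcard : n < Nat.card R) : ∃ t : R, t ^ n ≠ t := by
  by_contra! h
  have := Fintype.ofFinite R
  have hdeg : (X ^ n - X : R[X]).natDegree = n := by
    rw [natDegree_sub_eq_left_of_natDegree_lt] <;> simp [hn]
  have hne : (X ^ n - X : R[X]) ≠ 0 := fun h0 => by simp [h0] at hdeg; omega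
  have hroots : (Finset.univ : Finset R).val ⊆ (X ^ n - X : R[X]).roots := fun t _ => by
    simp [mem_roots hne, h t]
  have := card_le_degree_of_subset_roots hroots
  rw [hdeg, Finset.card_univ, Fintype.card_eq_nat_card] at this
  omega

theorem natCard_F8 : Nat.card F8 = 8 := GaloisField.card 2 3 (by norm_num)

namespace SylowSz8

theorem commute_iff {x y : SylowSz8} : Commute x y ↔ y.a * x.a ^ 4 = x.a * y.a ^ 4 := by
  constructor
  · intro h
    have := congrArg b h
    simp only [mul_b] at this
    linear_combination this
  · intro h
    refine ext' (add_comm _ _) ?_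
    simp only [mul_b, h]
    ring

theorem mem_center_iff {x : SylowSz8} : x ∈ Subgroup.center SylowSz8 ↔ x.a = 0 := by
  rw [Subgroup.mem_center_iff]
  constructor
  · intro h
    have hcomm (c : F8) : x.a * c ^ 4 = c * x.a ^ 4 := commute_iff.mp (h ⟨c, 0⟩)
    obtain ⟨t, ht⟩ := exists_pow_ne_self (R := F8) (n := 4) (by norm_num)
      (by rw [natCard_F8]; norm_num)
    have hfix : x.a ^ 4 = x.a := by simpa using (hcomm 1).symm
    have : x.a * (t ^ 4 - t) = 0 := by linear_combination hcomm t + t * hfix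
    exact (mul_eq_zero.mp this).resolve_right (sub_ne_zero.mpr ht)
  · intro ha g
    exact (commute_iff.mpr (by simp [ha])).symm

noncomputable def ofB : Multiplicative F8 →* SylowSz8 where
  toFun t := ⟨0, t.toAdd⟩
  map_one' := rfl
  map_mul' s t := ext' (by simp) (by simp)

theorem ofB_injective : Function.Injective ofB := fun _ _ h => congrArg b h

theorem range_ofB : ofB.range = Subgroup.center SylowSz8 := by
  ext x
  rw [mem_center_iff]
  constructor
  · rintro ⟨t, rfl⟩
    rfl
  · intro ha
    exact ⟨Multiplicative.ofAdd x.b, ext' ha.symm rfl⟩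

noncomputable def centerEquiv : Subgroup.center SylowSz8 ≃* Multiplicative F8 :=
  (MulEquiv.subgroupCongr range_ofB.symm).trans (MonoidHom.ofInjective ofB_injective).symm

theorem mul_self_eq_one_of_a_eq_zero {x : SylowSz8} (ha : x.a = 0) : x * x = 1 :=
  ext' (by simp [ha]) (by simp [ha, CharTwo.add_self_eq_zero])

end SylowSz8

/-- The center of `S` is exactly `{(0, b) : b ∈ F₈}`; in particular it is isomorphic to the
additive group of `F₈`, hence elementary abelian of order 8. -/
theorem center_SylowSz8 :
    (∀ x : SylowSz8, x ∈ Subgroup.center SylowSz8 ↔ x.a = 0) ∧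
    Nonempty (Subgroup.center SylowSz8 ≃* Multiplicative F8) ∧
    Nat.card (Subgroup.center SylowSz8) = 8 ∧
    (∀ x ∈ Subgroup.center SylowSz8, x * x = 1) :=
  ⟨fun _ => SylowSz8.mem_center_iff, ⟨SylowSz8.centerEquiv⟩,
    (Nat.card_congr SylowSz8.centerEquiv.toEquiv).trans natCard_F8,
    fun _ hx => SylowSz8.mul_self_eq_one_of_a_eq_zero (SylowSz8.mem_center_iff.mp hx)⟩
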